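/- arXiv:2202.03356 — 4 statements merged into one kernel-verified Lean document; each statement's English description precedes it below -/
import Mathlib

section
/- Let G be a digraph and A a schedule on G with maximum communication step t_max. Define the transpose digraph G^T by (v,u) ∈ E_{G^T} iff (u,v) ∈ E_G, and the reverse schedule A^T on G^T by ((w,C),(v,u),t_max−t+1) ∈ A^T iff ((w,C),(u,v),t) ∈ A. Then: if A is a reduce-scatter schedule on G, A^T is an allgather schedule on G^T; and if A is an allgather schedule on G, A^T is a reduce-scatter schedule on G^T. -/
open MeasureTheory

namespace Collective

/-- A communication tuple `((w,C),(u,v),t)`. -/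
abbrev Tup (V : Type*) := V × Set ℝ × (V × V) × ℕ

/-- A schedule is a set of communication tuples. -/
abbrev Sched (V : Type*) := Set (Tup V)

/-- The data shard, identified with the interval `[0,1)`. -/
def shard : Set ℝ := Set.Ico (0 : ℝ) 1

/-- `A` is a valid (finite) schedule on the digraph with edge relation `E`:
every tuple uses an edge, its chunk is a measurable subset of the shard, and
its communication step is at least `1`. -/
def IsSched {V : Type*} (E : V → V → Prop) (A : Sched V) : Prop :=
  A.Finite ∧ ∀ p ∈ A, E p.2.2.1.1 p.2.2.1.2 ∧ p.2.1 ⊆ shard ∧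
    MeasurableSet p.2.1 ∧ 1 ≤ p.2.2.2

/-- The maximum communication step occurring in a schedule. -/
noncomputable def tmax {V : Type*} (A : Sched V) : ℕ :=
  sSup {t | ∃ p ∈ A, p.2.2.2 = t}

/-- `A` is a reduce-scatter schedule. -/
def IsReduceScatter {V : Type*} (A : Sched V) : Prop :=
  ∀ u v : V, u ≠ v → ∀ x ∈ shard,
    ∃ (m : ℕ) (w : Fin (m + 1) → V) (C : Fin m → Set ℝ) (t : Fin m → ℕ),
      w 0 = u ∧ w (Fin.last m) = v ∧ StrictMono t ∧
      ∀ i : Fin m, (v, C i, (w i.castSucc, w i.succ), t i) ∈ A ∧ x ∈ C i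

/-- `A` is an allgather schedule. -/
def IsAllgather {V : Type*} (A : Sched V) : Prop :=
  ∀ u v : V, u ≠ v → ∀ x ∈ shard,
    ∃ (m : ℕ) (w : Fin (m + 1) → V) (C : Fin m → Set ℝ) (t : Fin m → ℕ),
      w 0 = u ∧ w (Fin.last m) = v ∧ StrictMono t ∧
      ∀ i : Fin m, (u, C i, (w i.castSucc, w i.succ), t i) ∈ A ∧ x ∈ C i

/-- A digraph is `d`-regular if every vertex has out-degree `d` and in-degree `d`. -/
def IsRegular {V : Type*} (E : V → V → Prop) (d : ℕ) : Prop :=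
  ∀ v : V, {w | E v w}.ncard = d ∧ {w | E w v}.ncard = d

/-- Node latency `T_L(A) = t_max · α`. -/
noncomputable def latT {V : Type*} (α : ℝ) (A : Sched V) : ℝ := (tmax A : ℝ) * α

/-- Total chunk length sent over edge `e` at step `t`. -/
noncomputable def edgeLoad {V : Type*} (A : Sched V) (e : V × V) (t : ℕ) : ℝ :=
  ∑ᶠ p ∈ {p : Tup V | p ∈ A ∧ p.2.2.1 = e ∧ p.2.2.2 = t}, (volume p.2.1).toReal

/-- Bandwidth runtime of step `t`:
`T_B(A_t,M,B) = (d/B)·(M/N)·max_{(u,v)∈E} Σ_{((w,C),(u,v),t)∈A_t} |C|`. -/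
noncomputable def stepT {V : Type*} (E : V → V → Prop) (d : ℕ) (M B : ℝ)
    (A : Sched V) (t : ℕ) : ℝ :=
  ((d : ℝ) / B) * (M / (Nat.card V : ℝ)) *
    sSup ((fun e => edgeLoad A e t) '' {e : V × V | E e.1 e.2})

/-- Bandwidth runtime `T_B(A,M,B) = Σ_{t=1}^{t_max} T_B(A_t,M,B)`. -/
noncomputable def bwT {V : Type*} (E : V → V → Prop) (d : ℕ) (M B : ℝ)
    (A : Sched V) : ℝ :=
  ∑ t ∈ Finset.Icc 1 (tmax A), stepT E d M B A t

/-- There is a directed walk of length `n` from `u` to `v`. -/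
def HasWalk {V : Type*} (E : V → V → Prop) (u v : V) (n : ℕ) : Prop :=
  ∃ w : Fin (n + 1) → V, w 0 = u ∧ w (Fin.last n) = v ∧
    ∀ i : Fin n, E (w i.castSucc) (w i.succ)

/-- Strong connectivity. -/
def StronglyConnected {V : Type*} (E : V → V → Prop) : Prop :=
  ∀ u v : V, ∃ n, HasWalk E u v n

/-- Directed graph distance: the length of a shortest directed walk. -/
noncomputable def dist {V : Type*} (E : V → V → Prop) (u v : V) : ℕ :=
  sInf {n | HasWalk E u v n}

/-- Diameter `D(G) = max_{u,v} d(u,v)`. -/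
noncomputable def diam {V : Type*} (E : V → V → Prop) : ℕ :=
  sSup {n | ∃ u v : V, dist E u v = n}

/-- `A` is a shortest-path (reduce-scatter style) schedule:
`((v,C),(u,w),t) ∈ A` iff `d(u,v) = d(w,v)+1 = D(G)+1−t`. -/
def IsShortestPathSched {V : Type*} (E : V → V → Prop) (A : Sched V) : Prop :=
  (∀ (v : V) (C : Set ℝ) (u w : V) (t : ℕ), (v, C, (u, w), t) ∈ A →
      dist E u v = dist E w v + 1 ∧ dist E u v + t = diam E + 1) ∧
  (∀ (v u w : V) (t : ℕ), E u w → dist E u v = dist E w v + 1 →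
      dist E u v + t = diam E + 1 → ∃ C : Set ℝ, (v, C, (u, w), t) ∈ A)

/-- The transpose digraph. -/
def transpose {V : Type*} (E : V → V → Prop) : V → V → Prop := fun u v => E v u

/-- The reverse schedule `A^T`: `((w,C),(v,u),t_max−t+1) ∈ A^T` iff `((w,C),(u,v),t) ∈ A`. -/
noncomputable def reverseSched {V : Type*} (A : Sched V) : Sched V :=
  (fun q : Tup V => (q.1, q.2.1, (q.2.2.1.2, q.2.2.1.1), tmax A + 1 - q.2.2.2)) '' A

/-- The schedule obtained by relabeling vertices along `f`. -/
def mapSched {V : Type*} (f : V ≃ V) (A : Sched V) : Sched V :=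
  (fun q : Tup V => (f q.1, q.2.1, (f q.2.2.1.1, f q.2.2.1.2), q.2.2.2)) '' A

/-- The vertex set of the line graph `L(G)`: the edges of `G`. -/
def lineV {V : Type*} (E : V → V → Prop) : Type _ := {e : V × V // E e.1 e.2}

/-- The edge relation of the line graph: `uu' → vv'` iff `u' = v`. -/
def lineE {V : Type*} (E : V → V → Prop) : lineV E → lineV E → Prop :=
  fun e f => e.1.2 = f.1.1

/-- The line-graph-expanded schedule `A_{L(G)}`. -/
noncomputable def lineSched {V : Type*} (E : V → V → Prop) (A : Sched V) :
    Sched (lineV E) :=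
  {p | (∃ (v v' w u u' : V) (C : Set ℝ) (t : ℕ)
          (hvv' : E v v') (hwu : E w u) (huu' : E u u'),
          (v, C, (u, u'), t) ∈ A ∧ (v, v') ≠ (w, u) ∧
          p = (⟨(v, v'), hvv'⟩, C, (⟨(w, u), hwu⟩, ⟨(u, u'), huu'⟩), t))
     ∨ (∃ (u v v' : V) (huv : E u v) (hvv' : E v v'),
          (u, v) ≠ (v, v') ∧
          p = (⟨(v, v'), hvv'⟩, shard, (⟨(u, v), huv⟩, ⟨(v, v'), hvv'⟩), tmax A + 1))}

/-- A digraph bundled with a schedule, used to iterate line graph expansion. -/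
structure Alg : Type 1 where
  V : Type
  E : V → V → Prop
  A : Sched V

/-- One application of line graph expansion to a bundled algorithm. -/
noncomputable def lineAlg (G : Alg) : Alg :=
  ⟨lineV G.E, lineE G.E, lineSched G.E G.A⟩

/-- The degree-expanded digraph `G*n`. -/
def degE {V : Type*} (E : V → V → Prop) (n : ℕ) :
    (V × Fin n) → (V × Fin n) → Prop :=
  fun a b => E a.1 b.1

/-- The degree-expanded schedule `A_{G*n}`, relative to an enumeration `enum` of the
out-edges of each vertex of `G*n`. -/
noncomputable def degSched {V : Type*} (A : Sched V) (n d : ℕ)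
    (enum : V × Fin n → Fin (n * d) → V × Fin n) : Sched (V × Fin n) :=
  {p | (∃ (u : V) (i j : Fin n) (β : Fin (n * d)), i ≠ j ∧
          p = ((u, j),
               Set.Ico (((β : ℕ) : ℝ) / ((n : ℝ) * (d : ℝ)))
                 ((((β : ℕ) : ℝ) + 1) / ((n : ℝ) * (d : ℝ))),
               ((u, i), enum (u, i) β), 1))
     ∨ (∃ (w u v : V) (C : Set ℝ) (t : ℕ) (i j : Fin n),
          (w, C, (u, v), t) ∈ A ∧ p = ((w, j), C, ((u, i), (v, j)), t + 1))}

/-- The edge relation of the Cartesian power `G^{□n}`. -/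
def powE {V : Type*} (E : V → V → Prop) (n : ℕ) :
    (Fin n → V) → (Fin n → V) → Prop :=
  fun u v => ∃ j : Fin n, E (u j) (v j) ∧ ∀ k : Fin n, k ≠ j → u k = v k

/-- Cyclic rotation of coordinates by `i`. -/
def rot {V : Type*} {n : ℕ} (i : Fin n) (v : Fin n → V) : Fin n → V :=
  fun k => v (k - i)

/-- The Cartesian power allgather schedule `A_{G^{□n}}`: the `i`-th of the `n` schedules
`A^{(i)}` (a coordinate rotation of `A^{(1)}`) is run on the `i`-th equal subshard. -/
noncomputable def powSched {V : Type*} (A : Sched V) (n : ℕ) : Sched (Fin n → V) :=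
  {p | ∃ (i j : Fin n) (w u v : V) (C : Set ℝ) (t : ℕ) (a b : Fin n → V),
        (w, C, (u, v), t) ∈ A ∧ a j = w ∧ b j = u ∧ (∀ k : Fin n, j < k → a k = b k) ∧
        p = (rot i a, (fun x : ℝ => (((i : ℕ) : ℝ) + x) / (n : ℝ)) '' C,
             (rot i b, rot i (Function.update b j v)), t + (j : ℕ) * tmax A)}

/-- The edge relation of the Cartesian product `G₁□⋯□G_n` of a family of digraphs. -/
def boxE {n : ℕ} {V : Fin n → Type*} (E : ∀ i, V i → V i → Prop) :
    (∀ i, V i) → (∀ i, V i) → Prop :=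
  fun u v => ∃ j : Fin n, E j (u j) (v j) ∧ ∀ k : Fin n, k ≠ j → u k = v k

/-- The generalized Kautz digraph `Π_{d,m}` on `ℤ/mℤ`:
`x → y` iff `y ≡ −d·x − a (mod m)` for some `a ∈ {1,…,d}`. -/
def kautzE (d m : ℕ) : ZMod m → ZMod m → Prop :=
  fun x y => ∃ a : ℕ, 1 ≤ a ∧ a ≤ d ∧ y = -(d : ZMod m) * x - (a : ZMod m)

end Collective
namespace Collective

lemma le_tmax {V : Type*} {A : Sched V} (hfin : A.Finite) {p : Tup V} (hp : p ∈ A) :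
    p.2.2.2 ≤ tmax A := by
  have hset : {t | ∃ p ∈ A, p.2.2.2 = t} = (fun p : Tup V => p.2.2.2) '' A := by
    ext t; simp [Set.mem_image]
  have hbdd : BddAbove {t | ∃ p ∈ A, p.2.2.2 = t} := by
    rw [hset]; exact (hfin.image _).bddAbove
  exact le_csSup hbdd ⟨p, hp, rfl⟩

lemma reverse_path {V : Type*} {A : Sched V} (hfin : A.Finite)
    (o : V) (x : ℝ) (m : ℕ)
    (w : Fin (m + 1) → V) (C : Fin m → Set ℝ) (t : Fin m → ℕ)
    (ht : StrictMono t)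
    (hmem : ∀ i : Fin m, (o, C i, (w i.castSucc, w i.succ), t i) ∈ A ∧ x ∈ C i) :
    ∃ (w' : Fin (m + 1) → V) (C' : Fin m → Set ℝ) (t' : Fin m → ℕ),
      w' 0 = w (Fin.last m) ∧ w' (Fin.last m) = w 0 ∧ StrictMono t' ∧
      ∀ i : Fin m, (o, C' i, (w' i.castSucc, w' i.succ), t' i) ∈ reverseSched A ∧
        x ∈ C' i := by
  refine ⟨fun i => w i.rev, fun i => C i.rev, fun i => tmax A + 1 - t i.rev,
    by simp, by simp, ?_, ?_⟩
  · intro i j hij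
    have h2 : t i.rev ≤ tmax A := le_tmax hfin (hmem i.rev).1
    have h3 := ht (Fin.rev_lt_rev.mpr hij)
    show tmax A + 1 - t i.rev < tmax A + 1 - t j.rev
    omega
  · intro i
    refine ⟨⟨(o, C i.rev, (w (i.rev).castSucc, w (i.rev).succ), t i.rev),
      (hmem i.rev).1, ?_⟩, (hmem i.rev).2⟩
    simp [Fin.rev_castSucc, Fin.rev_succ]

/-- If `A` is a reduce-scatter schedule on `G`, then the reverse schedule
`A^T` is an allgather schedule on the transpose `G^T`, and vice versa. -/
theorem reverse_schedule_swaps_collectives {V : Type*} [Finite V]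
    (E : V → V → Prop) (A : Sched V) (hA : IsSched E A) :
    IsSched (transpose E) (reverseSched A) ∧
    (IsReduceScatter A → IsAllgather (reverseSched A)) ∧
    (IsAllgather A → IsReduceScatter (reverseSched A)) := by
  obtain ⟨hfin, hp⟩ := hA
  refine ⟨⟨hfin.image _, ?_⟩, ?_, ?_⟩
  · rintro p ⟨q, hq, rfl⟩
    obtain ⟨hE, hC, hM, h1⟩ := hp q hq
    have := le_tmax hfin hq
    refine ⟨hE, hC, hM, ?_⟩
    show 1 ≤ tmax A + 1 - q.2.2.2
    omega
  · intro hRS u v huv x hx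
    obtain ⟨m, w, C, t, hw0, hwl, ht, hall⟩ := hRS v u huv.symm x hx
    obtain ⟨w', C', t', hw0', hwl', ht', hall'⟩ := reverse_path hfin u x m w C t ht hall
    exact ⟨m, w', C', t', by rw [hw0', hwl], by rw [hwl', hw0], ht', hall'⟩
  · intro hAG u v huv x hx
    obtain ⟨m, w, C, t, hw0, hwl, ht, hall⟩ := hAG v u huv.symm x hx
    obtain ⟨w', C', t', hw0', hwl', ht', hall'⟩ := reverse_path hfin v x m w C t ht hall
    exact ⟨m, w', C', t', by rw [hw0', hwl], by rw [hwl', hw0], ht', hall'⟩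

end Collective
end

section
/- Let G be a simple d-regular digraph with d ≥ 2 and N = |V_G| vertices, and let (G,A_G) be a bandwidth optimal reduce-scatter algorithm. Then for every n ≥ 0, T_B(A_{L^n(G)},M,B) / [(M/B)·(d^n·N − 1)/(d^n·N)] ≤ 1 + 1/((d−1)·N); that is, the n-fold line-graph expansion is within a factor 1 + 1/((d−1)N) of the optimal bandwidth runtime on d^n·N nodes. -/
open MeasureTheory

/-!
Line graph expansion keeps every step of `A_G` and appends a single one. At an old step, a chunk
that `A_G` sends to `v` over `(u, u')` is sent over each line edge `(wu, uu')` once per out-edge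
`vv'`, so a line edge carries at most `d` times the load of an edge of `G`; as `L(G)` has `dN`
vertices, the cost of the step does not grow. The appended step sends a whole shard over every
line edge and costs `M / (B N)`. Hence
`T_B(A_{L^n(G)}) ≤ T_B(A_G) + (M / B) ∑_{k < n} 1 / (d^k N)`, and with
`T_B(A_G) = (M / B) (N - 1) / N` this geometric sum stays within the claimed factor.
-/

namespace Collective

open MeasureTheory Finset

section Schedule

variable {V : Type*}

lemma step_le_tmax {A : Sched V} (hA : A.Finite) {p : Tup V} (hp : p ∈ A) :
    p.2.2.2 ≤ tmax A :=
  le_csSup (hA.image fun p : Tup V => p.2.2.2).bddAbove ⟨p, hp, rfl⟩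

lemma loadSet_finite {A : Sched V} (hA : A.Finite) (e : V × V) (t : ℕ) :
    {p : Tup V | p ∈ A ∧ p.2.2.1 = e ∧ p.2.2.2 = t}.Finite :=
  hA.subset fun _ hp => hp.1

lemma edgeLoad_eq_sum {A : Sched V} (hA : A.Finite) (e : V × V) (t : ℕ) :
    edgeLoad A e t = ∑ p ∈ (loadSet_finite hA e t).toFinset, (volume p.2.1).toReal := by
  rw [edgeLoad, ← finsum_mem_coe_finset, Set.Finite.coe_toFinset]

lemma edgeLoad_nonneg (A : Sched V) (e : V × V) (t : ℕ) : 0 ≤ edgeLoad A e t :=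
  finsum_nonneg fun _ => finsum_nonneg fun _ => ENNReal.toReal_nonneg

lemma bddAbove_edgeLoad_image [Finite V] (A : Sched V) (P : Set (V × V)) (t : ℕ) :
    BddAbove ((fun e => edgeLoad A e t) '' P) :=
  (P.toFinite.image _).bddAbove

end Schedule

section LineGraph

variable {V : Type*} {E : V → V → Prop} {d : ℕ}

instance [Finite V] : Finite (lineV E) := Subtype.finite

lemma lineE_irrefl (hE : ∀ v, ¬ E v v) (e : lineV E) : ¬ lineE E e e := by
  obtain ⟨⟨u, v⟩, huv⟩ := e
  intro (h : v = u)
  subst h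
  exact hE v huv

lemma IsRegular.line (hreg : IsRegular E d) : IsRegular (lineE E) d := by
  intro e
  constructor
  · rw [← (hreg e.1.2).1, ← Nat.card_coe_set_eq, ← Nat.card_coe_set_eq]
    exact Nat.card_congr
      { toFun := fun f => ⟨f.1.1.2, (f.2 : e.1.2 = f.1.1.1) ▸ f.1.2⟩
        invFun := fun w => ⟨⟨(e.1.2, w.1), w.2⟩, rfl⟩
        left_inv := by
          rintro ⟨⟨⟨a, b⟩, hab⟩, hf⟩
          obtain rfl : e.1.2 = a := hf
          rfl
        right_inv := fun _ => rfl }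
  · rw [← (hreg e.1.1).2, ← Nat.card_coe_set_eq, ← Nat.card_coe_set_eq]
    exact Nat.card_congr
      { toFun := fun f => ⟨f.1.1.1, (f.2 : f.1.1.2 = e.1.1) ▸ f.1.2⟩
        invFun := fun w => ⟨⟨(w.1, e.1.1), w.2⟩, rfl⟩
        left_inv := by
          rintro ⟨⟨⟨a, b⟩, hab⟩, hf⟩
          obtain rfl : b = e.1.1 := hf
          rfl
        right_inv := fun _ => rfl }

lemma IsRegular.card_lineV [Finite V] (hreg : IsRegular E d) :
    Nat.card (lineV E) = d * Nat.card V := by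
  have := Fintype.ofFinite V
  rw [lineV, Nat.card_congr (Equiv.subtypeProdEquivSigmaSubtype E), Nat.card_sigma]
  have hout (v : V) : Nat.card {w // E v w} = d := by
    rw [← (hreg v).1, ← Nat.card_coe_set_eq]; rfl
  simp [hout, mul_comm]

lemma IsRegular.exists_lineE_ne [Nonempty V] (hreg : IsRegular E d) (hd : d ≠ 0)
    (hE : ∀ v, ¬ E v v) : ∃ e f : lineV E, lineE E e f ∧ e ≠ f := by
  obtain ⟨v⟩ := ‹Nonempty V›
  obtain ⟨u, hu⟩ : {w | E w v}.Nonempty :=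
    Set.nonempty_of_ncard_ne_zero ((hreg v).2 ▸ hd)
  obtain ⟨v', hv'⟩ : {w | E v w}.Nonempty :=
    Set.nonempty_of_ncard_ne_zero ((hreg v).1 ▸ hd)
  refine ⟨⟨(u, v), hu⟩, ⟨(v, v'), hv'⟩, rfl, fun h => ?_⟩
  obtain rfl : u = v := congrArg (·.1.1) h
  exact hE u hu

lemma top_mem_lineSched (A : Sched V) {e f : lineV E} (hef : lineE E e f) (hne : e ≠ f) :
    (f, shard, (e, f), tmax A + 1) ∈ lineSched E A := by
  obtain ⟨⟨u, v⟩, huv⟩ := e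
  obtain ⟨⟨v₁, v'⟩, hvv'⟩ := f
  obtain rfl : v = v₁ := hef
  exact Or.inr ⟨u, v, v', huv, hvv', fun h => hne (Subtype.ext h), rfl⟩

lemma source_mem_of_mem_lineSched {A : Sched V} {p : Tup (lineV E)} (hp : p ∈ lineSched E A)
    (ht : p.2.2.2 ≤ tmax A) : (p.1.1.1, p.2.1, p.2.2.1.2.1, p.2.2.2) ∈ A := by
  rcases hp with ⟨_, _, _, _, _, _, _, _, _, _, hq, -, rfl⟩ | ⟨_, _, _, _, _, -, rfl⟩
  · exact hq
  · exact absurd ht (Nat.not_succ_le_self _)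

lemma eq_top_of_mem_lineSched {A : Sched V} {p : Tup (lineV E)} (hA : A.Finite)
    (hp : p ∈ lineSched E A) (ht : tmax A < p.2.2.2) :
    p = (p.2.2.1.2, shard, p.2.2.1, tmax A + 1) := by
  rcases hp with ⟨_, _, _, _, _, _, _, _, _, _, hq, -, rfl⟩ | ⟨_, _, _, _, _, -, rfl⟩
  · exact absurd (step_le_tmax hA hq) ht.not_ge
  · rfl

lemma lineSched_finite [Finite V] {A : Sched V} (hA : A.Finite) : (lineSched E A).Finite := by
  refine Set.Finite.subset (s := Set.univ ×ˢ (((fun q : Tup V => q.2.1) '' A ∪ {shard}) ×ˢ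
      (Set.univ ×ˢ Set.Iic (tmax A + 1)))) ?_ ?_
  · exact Set.finite_univ.prod (((hA.image _).union (Set.finite_singleton _)).prod
      (Set.finite_univ.prod (Set.finite_Iic _)))
  · rintro p (⟨_, _, _, _, _, _, _, _, _, _, hq, -, rfl⟩ | ⟨_, _, _, _, _, -, rfl⟩)
    · exact ⟨trivial, Or.inl ⟨_, hq, rfl⟩, trivial,
        (step_le_tmax hA hq).trans (Nat.le_succ _)⟩
    · exact ⟨trivial, Or.inr rfl, trivial, Set.mem_Iic.2 le_rfl⟩

lemma tmax_lineSched [Finite V] [Nonempty V] {A : Sched V} (hA : A.Finite)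
    (hreg : IsRegular E d) (hd : d ≠ 0) (hE : ∀ v, ¬ E v v) :
    tmax (lineSched E A) = tmax A + 1 := by
  obtain ⟨e, f, hef, hne⟩ := hreg.exists_lineE_ne hd hE
  have htop := top_mem_lineSched A hef hne
  refine le_antisymm (csSup_le ⟨_, _, htop, rfl⟩ ?_) (step_le_tmax (lineSched_finite hA) htop)
  rintro _ ⟨p, hp, rfl⟩
  by_contra! h
  rw [eq_top_of_mem_lineSched hA hp (by omega)] at h
  exact lt_irrefl _ h

lemma edgeLoad_lineSched_le [Finite V] {A : Sched V} (hA : A.Finite) (hreg : IsRegular E d)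
    (e f : lineV E) {t : ℕ} (ht : t ≤ tmax A) :
    edgeLoad (lineSched E A) (e, f) t ≤ d * edgeLoad A f.1 t := by
  classical
  set SL := (loadSet_finite (lineSched_finite hA) (e, f) t).toFinset
  set SA := (loadSet_finite hA f.1 t).toFinset
  let source : Tup (lineV E) → Tup V := fun p => (p.1.1.1, p.2.1, p.2.2.1.2.1, p.2.2.2)
  have hmaps : ∀ p ∈ SL, source p ∈ SA := by
    intro p hp
    obtain ⟨hpA, he, hpt⟩ := (Set.Finite.mem_toFinset _).1 hp
    exact (Set.Finite.mem_toFinset _).2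
      ⟨source_mem_of_mem_lineSched hpA (hpt ▸ ht), by simp [source, he], hpt⟩
  -- a tuple of the fibre over `q` is determined by the out-edge `vv'` it is copied to
  have hfiber : ∀ q ∈ SA, #{p ∈ SL | source p = q} ≤ d := by
    intro q _
    rw [← (hreg q.1).1, Set.ncard_eq_toFinset_card _ (Set.toFinite _)]
    refine card_le_card_of_injOn (fun p => p.1.1.2) (fun p hp => ?_) (fun p hp p' hp' h => ?_)
    · obtain ⟨-, rfl⟩ := mem_filter.1 hp
      simpa using p.1.2
    · obtain ⟨hpL, hq⟩ := mem_filter.1 hp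
      obtain ⟨hpL', hq'⟩ := mem_filter.1 hp'
      obtain ⟨-, he, ht⟩ := (Set.Finite.mem_toFinset _).1 hpL
      obtain ⟨-, he', ht'⟩ := (Set.Finite.mem_toFinset _).1 hpL'
      have hs := hq.trans hq'.symm
      exact Prod.ext (Subtype.ext (Prod.ext (congrArg (·.1) hs) h))
        (Prod.ext (congrArg (·.2.1) hs) (Prod.ext (he.trans he'.symm) (ht.trans ht'.symm)))
  calc edgeLoad (lineSched E A) (e, f) t
      = ∑ p ∈ SL, (volume p.2.1).toReal := edgeLoad_eq_sum (lineSched_finite hA) _ _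
    _ = ∑ q ∈ SA, ∑ p ∈ SL with source p = q, (volume p.2.1).toReal :=
        (sum_fiberwise_of_maps_to hmaps _).symm
    _ = ∑ q ∈ SA, #{p ∈ SL | source p = q} * (volume q.2.1).toReal := by
        refine sum_congr rfl fun q _ => ?_
        rw [← nsmul_eq_mul, ← sum_const]
        exact sum_congr rfl fun p hp => by rw [← (mem_filter.1 hp).2]
    _ ≤ ∑ q ∈ SA, d * (volume q.2.1).toReal := by
        gcongr with q hq
        exact_mod_cast hfiber q hq
    _ = d * edgeLoad A f.1 t := by rw [← mul_sum, edgeLoad_eq_sum hA]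

lemma edgeLoad_lineSched_top {A : Sched V} (hA : A.Finite) (hE : ∀ v, ¬ E v v)
    {e f : lineV E} (hef : lineE E e f) : edgeLoad (lineSched E A) (e, f) (tmax A + 1) = 1 := by
  have hne : e ≠ f := fun h => lineE_irrefl hE f (h ▸ hef)
  have hload : {p | p ∈ lineSched E A ∧ p.2.2.1 = (e, f) ∧ p.2.2.2 = tmax A + 1} =
      {(f, shard, (e, f), tmax A + 1)} := by
    ext p
    constructor
    · rintro ⟨hp, he, ht⟩
      calc p = _ := eq_top_of_mem_lineSched hA hp (by omega)
        _ = _ := by rw [he]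
    · rintro rfl
      exact ⟨top_mem_lineSched A hef hne, rfl, rfl⟩
  rw [edgeLoad, hload, finsum_mem_singleton]
  simp [shard]

lemma stepT_lineSched_le [Finite V] {A : Sched V} (hA : A.Finite) (hreg : IsRegular E d)
    (hd : d ≠ 0) {M B : ℝ} (hM : 0 ≤ M) (hB : 0 ≤ B) {t : ℕ} (ht : t ≤ tmax A) :
    stepT (lineE E) d M B (lineSched E A) t ≤ stepT E d M B A t := by
  set S := sSup ((fun e => edgeLoad A e t) '' {e : V × V | E e.1 e.2})
  have hS : 0 ≤ S := Real.sSup_nonneg (by rintro _ ⟨e, -, rfl⟩; exact edgeLoad_nonneg A e t)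
  have hload : sSup ((fun e => edgeLoad (lineSched E A) e t) ''
      {e : lineV E × lineV E | lineE E e.1 e.2}) ≤ d * S := by
    refine Real.sSup_le ?_ (by positivity)
    rintro _ ⟨⟨e, f⟩, -, rfl⟩
    refine (edgeLoad_lineSched_le hA hreg e f ht).trans ?_
    gcongr
    exact le_csSup (bddAbove_edgeLoad_image A _ t) ⟨f.1, f.2, rfl⟩
  have hd' : (d : ℝ) ≠ 0 := Nat.cast_ne_zero.2 hd
  rw [stepT, stepT, hreg.card_lineV, Nat.cast_mul]
  calc _ ≤ (d / B) * (M / (d * Nat.card V)) * (d * S) := by gcongr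
    _ = (d / B) * (M / Nat.card V) * S := by field_simp

lemma stepT_lineSched_top [Finite V] [Nonempty V] {A : Sched V} (hA : A.Finite)
    (hreg : IsRegular E d) (hd : d ≠ 0) (hE : ∀ v, ¬ E v v) (M B : ℝ) :
    stepT (lineE E) d M B (lineSched E A) (tmax A + 1) = M / (B * Nat.card V) := by
  obtain ⟨e, f, hef, -⟩ := hreg.exists_lineE_ne hd hE
  have hloads : (fun e => edgeLoad (lineSched E A) e (tmax A + 1)) ''
      {e : lineV E × lineV E | lineE E e.1 e.2} = {1} := by
    refine Set.eq_singleton_iff_unique_mem.2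
      ⟨⟨(e, f), hef, edgeLoad_lineSched_top hA hE hef⟩, ?_⟩
    rintro _ ⟨⟨e', f'⟩, hef', rfl⟩
    exact edgeLoad_lineSched_top hA hE hef'
  have hd' : (d : ℝ) ≠ 0 := Nat.cast_ne_zero.2 hd
  rw [stepT, hloads, csSup_singleton, hreg.card_lineV, Nat.cast_mul]
  field_simp

lemma bwT_lineSched_le [Finite V] [Nonempty V] {A : Sched V} (hA : A.Finite)
    (hreg : IsRegular E d) (hd : d ≠ 0) (hE : ∀ v, ¬ E v v) {M B : ℝ} (hM : 0 ≤ M)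
    (hB : 0 ≤ B) :
    bwT (lineE E) d M B (lineSched E A) ≤ bwT E d M B A + M / (B * Nat.card V) := by
  rw [bwT, bwT, tmax_lineSched hA hreg hd hE, sum_Icc_succ_top (by omega),
    stepT_lineSched_top hA hreg hd hE]
  gcongr with t ht
  exact stepT_lineSched_le hA hreg hd hM hB (mem_Icc.1 ht).2

end LineGraph

namespace Alg

structure IsFiniteSimpleRegular (G : Alg) (d : ℕ) : Prop where
  finite : Finite G.V
  nonempty : Nonempty G.V
  irrefl : ∀ v, ¬ G.E v v
  regular : IsRegular G.E d
  sched_finite : G.A.Finite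

variable {G : Alg} {d : ℕ}

lemma IsFiniteSimpleRegular.line (hG : G.IsFiniteSimpleRegular d) (hd : d ≠ 0) :
    (lineAlg G).IsFiniteSimpleRegular d := by
  have := hG.finite
  have := hG.nonempty
  obtain ⟨e, -⟩ := hG.regular.exists_lineE_ne hd hG.irrefl
  exact ⟨inferInstanceAs (Finite (lineV G.E)), ⟨e⟩, lineE_irrefl hG.irrefl, hG.regular.line,
    lineSched_finite hG.sched_finite⟩

lemma IsFiniteSimpleRegular.iterate (hG : G.IsFiniteSimpleRegular d) (hd : d ≠ 0) (n : ℕ) :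
    (lineAlg^[n] G).IsFiniteSimpleRegular d := by
  induction n with
  | zero => exact hG
  | succ n ih => rw [Function.iterate_succ_apply']; exact ih.line hd

lemma IsFiniteSimpleRegular.card_iterate (hG : G.IsFiniteSimpleRegular d) (hd : d ≠ 0)
    (n : ℕ) : Nat.card (lineAlg^[n] G).V = d ^ n * Nat.card G.V := by
  induction n with
  | zero => simp
  | succ n ih =>
    have := (hG.iterate hd n).finite
    rw [Function.iterate_succ_apply', lineAlg, (hG.iterate hd n).regular.card_lineV, ih]
    ring

lemma IsFiniteSimpleRegular.bwT_iterate_le (hG : G.IsFiniteSimpleRegular d) (hd : d ≠ 0)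
    {M B : ℝ} (hM : 0 ≤ M) (hB : 0 ≤ B) (n : ℕ) :
    bwT (lineAlg^[n] G).E d M B (lineAlg^[n] G).A ≤
      bwT G.E d M B G.A + ∑ k ∈ range n, M / (B * (d ^ k * Nat.card G.V)) := by
  induction n with
  | zero => simp
  | succ n ih =>
    obtain ⟨_, _, hE, hreg, hA⟩ := hG.iterate hd n
    rw [Function.iterate_succ_apply', sum_range_succ, ← add_assoc]
    refine (bwT_lineSched_le hA hreg hd hE hM hB).trans ?_
    rw [hG.card_iterate hd n, Nat.cast_mul, Nat.cast_pow]
    gcongr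

end Alg

lemma sub_div_add_sum_le {d N : ℝ} (hd : 1 < d) (hN : 1 ≤ N) (n : ℕ) :
    (N - 1) / N + ∑ k ∈ range n, 1 / (d ^ k * N) ≤
      (1 + 1 / ((d - 1) * N)) * ((d ^ n * N - 1) / (d ^ n * N)) := by
  have hd₀ : d ≠ 0 := by positivity
  have hd₁ : d - 1 ≠ 0 := sub_ne_zero.2 hd.ne'
  have hN₀ : N ≠ 0 := by positivity
  have hsum : ∑ k ∈ range n, 1 / (d ^ k * N) = d * (1 - 1 / d ^ n) / ((d - 1) * N) := by
    induction n with
    | zero => simp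
    | succ n ih =>
      rw [sum_range_succ, ih]
      field_simp
      ring
  have hgap : (1 + 1 / ((d - 1) * N)) * ((d ^ n * N - 1) / (d ^ n * N)) -
      ((N - 1) / N + d * (1 - 1 / d ^ n) / ((d - 1) * N)) =
        (N - 1) / ((d - 1) * N ^ 2 * d ^ n) := by
    field_simp
    ring
  rw [hsum, ← sub_nonneg, hgap]
  have : 0 < d - 1 := sub_pos.2 hd
  positivity

theorem iterated_line_graph_bw_ratio_general (G : Alg) [Finite G.V] (d : ℕ) (hd : 2 ≤ d)
    (hsimple : ∀ v : G.V, ¬ G.E v v) (hreg : IsRegular G.E d) (hA : IsSched G.E G.A)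
    (M B : ℝ) (hM : 0 < M) (hB : 0 < B)
    (hopt : bwT G.E d M B G.A
      = (M / B) * (((Nat.card G.V : ℝ) - 1) / (Nat.card G.V : ℝ)))
    (n : ℕ) :
    bwT (lineAlg^[n] G).E d M B (lineAlg^[n] G).A /
        ((M / B) * (((d : ℝ) ^ n * (Nat.card G.V : ℝ) - 1) /
          ((d : ℝ) ^ n * (Nat.card G.V : ℝ))))
      ≤ 1 + 1 / (((d : ℝ) - 1) * (Nat.card G.V : ℝ)) := by
  rcases isEmpty_or_nonempty G.V with hV | hV
  · simp
  have hG : G.IsFiniteSimpleRegular d := ⟨‹_›, hV, hsimple, hreg, hA.1⟩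
  set N : ℝ := (Nat.card G.V : ℝ)
  have hN : 1 ≤ N := Nat.one_le_cast.2 Nat.card_pos
  have hd₁ : (1 : ℝ) < d := by exact_mod_cast hd
  have hdN : 1 ≤ (d : ℝ) ^ n * N := one_le_mul_of_one_le_of_one_le (one_le_pow₀ hd₁.le) hN
  refine div_le_of_le_mul₀ (by have := sub_nonneg.2 hdN; positivity) (by positivity) ?_
  calc bwT (lineAlg^[n] G).E d M B (lineAlg^[n] G).A
      ≤ bwT G.E d M B G.A + ∑ k ∈ range n, M / (B * (d ^ k * N)) :=
        hG.bwT_iterate_le (by omega) hM.le hB.le n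
    _ = M / B * ((N - 1) / N + ∑ k ∈ range n, 1 / (d ^ k * N)) := by
        rw [hopt, mul_add, mul_sum]
        congr 1
        exact sum_congr rfl fun k _ => by field_simp
    _ ≤ M / B * ((1 + 1 / ((d - 1) * N)) * ((d ^ n * N - 1) / (d ^ n * N))) := by
        gcongr
        exact sub_div_add_sum_le hd₁ hN n
    _ = _ := by ring

/-- if `(G,A_G)` is a bandwidth optimal reduce-scatter algorithm on a simple
`d`-regular digraph with `N` vertices, then for every `n ≥ 0` the `n`-fold line-graph
expansion is within a factor `1 + 1/((d−1)N)` of the optimal bandwidth runtime on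
`d^n·N` nodes. -/
theorem iterated_line_graph_bw_ratio (G : Alg) [Finite G.V] (d : ℕ) (hd : 2 ≤ d)
    (hsimple : ∀ v : G.V, ¬ G.E v v) (hreg : IsRegular G.E d) (hA : IsSched G.E G.A)
    (hRS : IsReduceScatter G.A) (M B : ℝ) (hM : 0 < M) (hB : 0 < B)
    (hopt : bwT G.E d M B G.A
      = (M / B) * (((Nat.card G.V : ℝ) - 1) / (Nat.card G.V : ℝ)))
    (n : ℕ) :
    bwT (lineAlg^[n] G).E d M B (lineAlg^[n] G).A /
        ((M / B) * (((d : ℝ) ^ n * (Nat.card G.V : ℝ) - 1) /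
          ((d : ℝ) ^ n * (Nat.card G.V : ℝ))))
      ≤ 1 + 1 / (((d : ℝ) - 1) * (Nat.card G.V : ℝ)) :=
  iterated_line_graph_bw_ratio_general G d hd hsimple hreg hA M B hM hB hopt n

end Collective
end

section
/- Let (G,A) be a shortest-path reduce-scatter algorithm on a strongly connected d-regular digraph G with N vertices. Then (G,A) is bandwidth optimal if and only if both: (1) there is a sequence N_1,…,N_{D(G)} of natural numbers such that |N_x(u)| = N_x for every vertex u and every x ∈ {1,…,D(G)}, where N_x(u) = {v ∈ V_G : d(u,v) = x}; and (2) for every edge (u,v) ∈ E_G and every step t ∈ {1,…,D(G)}, the total chunk length sent over the edge at step t satisfies Σ_{((w,C),(u,v),t)∈A_t}|C| = N_x/d, where x = D(G)+1−t. -/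
open MeasureTheory

namespace Collective

section Walk
variable {V : Type*} (E : V → V → Prop)

theorem hasWalk_refl (u : V) : HasWalk E u u 0 :=
  ⟨fun _ => u, rfl, rfl, fun i => i.elim0⟩

theorem hasWalk_zero_iff {u v : V} : HasWalk E u v 0 ↔ u = v := by
  constructor
  · rintro ⟨w, h0, hl, -⟩
    rw [← h0, ← hl]; rfl
  · rintro rfl; exact hasWalk_refl E u

theorem hasWalk_cons {u w v : V} {n : ℕ} (h : E u w) (hw : HasWalk E w v n) :
    HasWalk E u v (n + 1) := by
  obtain ⟨ww, h0, hl, he⟩ := hw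
  refine ⟨Fin.cons u ww, rfl, ?_, ?_⟩
  · have : Fin.last (n + 1) = (Fin.last n).succ := rfl
    rw [this, Fin.cons_succ, hl]
  · intro i
    refine Fin.cases ?_ ?_ i
    · simpa [h0] using h
    · intro j
      have h1 : (j.succ : Fin (n+1)).castSucc = (j.castSucc).succ := rfl
      rw [h1, Fin.cons_succ, Fin.cons_succ]
      exact he j

theorem hasWalk_decompose {u v : V} {n : ℕ} (h : HasWalk E u v (n + 1)) :
    ∃ w, E u w ∧ HasWalk E w v n := by
  obtain ⟨ww, h0, hl, he⟩ := h
  refine ⟨ww (0 : Fin (n+1)).succ, ?_, fun i => ww i.succ, rfl, ?_, ?_⟩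
  · have := he 0
    simpa [h0] using this
  · show ww (Fin.last n).succ = v
    have : (Fin.last n).succ = Fin.last (n + 1) := rfl
    rw [this, hl]
  · intro i
    show E (ww i.castSucc.succ) (ww i.succ.succ)
    have h2 := he i.succ
    have h3 : i.succ.castSucc = i.castSucc.succ := by ext; simp
    rwa [h3] at h2

variable {E}

theorem dist_self (u : V) : dist E u u = 0 :=
  Nat.sInf_eq_zero.2 (Or.inl (hasWalk_refl E u))

theorem hasWalk_dist (hsc : StronglyConnected E) (u v : V) :
    HasWalk E u v (dist E u v) :=
  Nat.sInf_mem (hsc u v)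

theorem eq_of_dist_eq_zero (hsc : StronglyConnected E) {u v : V}
    (h : dist E u v = 0) : u = v := by
  have := hasWalk_dist hsc u v
  rw [h, hasWalk_zero_iff] at this; exact this

theorem dist_le_of_hasWalk {u v : V} {n : ℕ} (h : HasWalk E u v n) :
    dist E u v ≤ n := Nat.sInf_le h

theorem dist_le_edge (hsc : StronglyConnected E) {u w : V} (v : V) (h : E u w) :
    dist E u v ≤ dist E w v + 1 :=
  dist_le_of_hasWalk (hasWalk_cons E h (hasWalk_dist hsc w v))

theorem dist_le_diam [Finite V] (u v : V) : dist E u v ≤ diam E := by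
  have hfin : {n | ∃ a b : V, dist E a b = n}.Finite := by
    have : {n | ∃ a b : V, dist E a b = n} = Set.range (fun p : V × V => dist E p.1 p.2) := by
      ext n; constructor
      · rintro ⟨a, b, h⟩; exact ⟨(a, b), h⟩
      · rintro ⟨⟨a, b⟩, h⟩; exact ⟨a, b, h⟩
    rw [this]; exact Set.finite_range _
  exact le_csSup hfin.bddAbove ⟨u, v, rfl⟩

theorem exists_step (hsc : StronglyConnected E) {u v : V} {n : ℕ}
    (h : dist E u v = n + 1) : ∃ w, E u w ∧ dist E w v = n := by
  have hw := hasWalk_dist hsc u v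
  rw [h] at hw
  obtain ⟨w, huw, hwv⟩ := hasWalk_decompose E hw
  refine ⟨w, huw, le_antisymm (dist_le_of_hasWalk hwv) ?_⟩
  have := dist_le_edge hsc v huw
  omega

theorem dist_eq_one_aux (hsc : StronglyConnected E) (k : ℕ) :
    ∀ u v : V, dist E u v = k + 1 → ∃ a b : V, dist E a b = 1 := by
  induction k with
  | zero => exact fun u v h => ⟨u, v, h⟩
  | succ k ih =>
    intro u v h
    obtain ⟨w, -, hw⟩ := exists_step hsc h
    exact ih w v hw

theorem dist_eq_one_of_exists_ne (hsc : StronglyConnected E) {u v : V} (h : u ≠ v) :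
    ∃ a b : V, dist E a b = 1 := by
  rcases hn : dist E u v with _ | k
  · exact absurd (eq_of_dist_eq_zero hsc hn) h
  · exact dist_eq_one_aux hsc k u v hn

theorem edge_of_dist_eq_one (hsc : StronglyConnected E) {u v : V}
    (h : dist E u v = 1) : E u v := by
  have hw := hasWalk_dist hsc u v
  rw [h] at hw
  obtain ⟨ww, h0, hl, he⟩ := hw
  have := he 0
  have e1 : ((0 : Fin 1)).castSucc = (0 : Fin 2) := rfl
  have e2 : ((0 : Fin 1)).succ = Fin.last 1 := rfl
  rw [e1, e2, h0, hl] at this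
  exact this

end Walk

section SchedLemmas
open scoped Classical
variable {V : Type*} {E : V → V → Prop} {A : Sched V}

theorem edgeLoad_eq (hA : A.Finite) (e : V × V) (t : ℕ) :
    edgeLoad A e t = ∑ q ∈ hA.toFinset.filter
      (fun q => q.2.2.1 = e ∧ q.2.2.2 = t), (volume q.2.1).toReal := by
  classical
  rw [edgeLoad]
  have hset : {p : Tup V | p ∈ A ∧ p.2.2.1 = e ∧ p.2.2.2 = t} =
      ↑(hA.toFinset.filter (fun q => q.2.2.1 = e ∧ q.2.2.2 = t)) := by
    ext p; simp [Set.Finite.mem_toFinset]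
  rw [hset, finsum_mem_coe_finset]

theorem volume_shard : volume shard = 1 := by
  simp [shard]

theorem tmax_eq_diam [Finite V] (hsc : StronglyConnected E)
    (hsp : IsShortestPathSched E A) (hnt : Nontrivial V) : tmax A = diam E := by
  obtain ⟨a, b, hab⟩ := hnt
  obtain ⟨a', b', hd1⟩ := dist_eq_one_of_exists_ne hsc hab
  have hE : E a' b' := edge_of_dist_eq_one hsc hd1
  obtain ⟨C, hC⟩ := hsp.2 b' a' b' (diam E) hE
    (by rw [hd1, dist_self]) (by omega)
  have hmem : diam E ∈ {t | ∃ p ∈ A, p.2.2.2 = t} := ⟨_, hC, rfl⟩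
  have hub : ∀ s ∈ {t | ∃ p ∈ A, p.2.2.2 = t}, s ≤ diam E := by
    rintro s ⟨p, hp, rfl⟩
    have h1 := hsp.1 p.1 p.2.1 p.2.2.1.1 p.2.2.1.2 p.2.2.2 hp
    have h2 : 1 ≤ dist E p.2.2.1.1 p.1 := by omega
    omega
  exact le_antisymm (csSup_le ⟨_, hmem⟩ hub) (le_csSup ⟨diam E, hub⟩ hmem)

theorem one_le_P [Finite V] (hsc : StronglyConnected E) (hA : IsSched E A)
    (hRS : IsReduceScatter A) (hsp : IsShortestPathSched E A)
    {u v : V} {t : ℕ} (ht1 : 1 ≤ t) (htD : t ≤ diam E)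
    (hd : dist E u v = diam E + 1 - t) :
    (1 : ℝ) ≤ ∑ q ∈ hA.1.toFinset.filter
      (fun q => q.1 = v ∧ q.2.2.1.1 = u ∧ q.2.2.2 = t), (volume q.2.1).toReal := by
  classical
  set Φ := hA.1.toFinset.filter
      (fun q : Tup V => q.1 = v ∧ q.2.2.1.1 = u ∧ q.2.2.2 = t) with hΦ
  have hx1 : 1 ≤ dist E u v := by omega
  have hne : u ≠ v := by
    intro h; rw [h, dist_self] at hx1; omega
  have hcover : shard ⊆ ⋃ q ∈ Φ, q.2.1 := by
    intro p hp
    obtain ⟨m, w, C, tt, hw0, hwl, hmono, hall⟩ := hRS u v hne p hp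
    rcases m with _ | k
    · exact absurd (hw0 ▸ hwl ▸ rfl : u = v) hne
    obtain ⟨hq, hpC⟩ := hall 0
    have hcs : (0 : Fin (k + 1)).castSucc = 0 := rfl
    rw [hcs, hw0] at hq
    have h1 := hsp.1 v (C 0) u (w (0 : Fin (k+1)).succ) (tt 0) hq
    have htt : tt 0 = t := by omega
    rw [htt] at hq
    have hmem : (v, C 0, (u, w (0 : Fin (k+1)).succ), tt 0).2.2.2 = t := htt
    have hqΦ : (v, C 0, (u, w (0 : Fin (k+1)).succ), t) ∈ Φ := by
      rw [hΦ]
      exact Finset.mem_filter.2 ⟨(Set.Finite.mem_toFinset _).2 hq, rfl, rfl, rfl⟩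
    exact Set.mem_biUnion hqΦ hpC
  have hle : volume shard ≤ ∑ q ∈ Φ, volume q.2.1 :=
    le_trans (measure_mono hcover) (measure_biUnion_finset_le Φ _)
  have hsub : ∀ q ∈ Φ, volume q.2.1 ≤ 1 := by
    intro q hq
    rw [hΦ, Finset.mem_filter, Set.Finite.mem_toFinset] at hq
    calc volume q.2.1 ≤ volume shard := measure_mono (hA.2 q hq.1).2.1
    _ = 1 := volume_shard
  have hfin' : ∀ q ∈ Φ, volume q.2.1 ≠ ⊤ :=
    fun q hq => (lt_of_le_of_lt (hsub q hq) ENNReal.one_lt_top).ne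
  have hfin : (∑ q ∈ Φ, volume q.2.1) ≠ ⊤ :=
    (ENNReal.sum_lt_top.2 fun q hq => lt_of_le_of_lt (hsub q hq) ENNReal.one_lt_top).ne
  calc (1 : ℝ) = (volume shard).toReal := by rw [volume_shard]; simp
  _ ≤ (∑ q ∈ Φ, volume q.2.1).toReal := ENNReal.toReal_mono hfin hle
  _ = ∑ q ∈ Φ, (volume q.2.1).toReal := ENNReal.toReal_sum hfin'

end SchedLemmas

/-- a shortest-path reduce-scatter algorithm on a strongly connected
`d`-regular digraph is bandwidth optimal iff (1) `|N_x(u)|` is independent of `u` for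
`x ∈ {1,…,D(G)}`, with common value `N_x`, and (2) every edge carries total chunk length
`N_x/d` at step `t`, where `x = D(G)+1−t`. -/
theorem shortest_path_bw_optimal_iff {V : Type*} [Finite V]
    (E : V → V → Prop) (d : ℕ) (A : Sched V)
    (hsc : StronglyConnected E) (hreg : IsRegular E d)
    (hA : IsSched E A) (hRS : IsReduceScatter A) (hsp : IsShortestPathSched E A)
    (M B : ℝ) (hM : 0 < M) (hB : 0 < B) :
    bwT E d M B A = (M / B) * (((Nat.card V : ℝ) - 1) / (Nat.card V : ℝ)) ↔
      ∃ Ns : ℕ → ℕ,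
        (∀ u : V, ∀ x : ℕ, 1 ≤ x → x ≤ diam E →
          {v : V | dist E u v = x}.ncard = Ns x) ∧
        (∀ u v : V, E u v → ∀ t : ℕ, 1 ≤ t → t ≤ diam E →
          edgeLoad A (u, v) t = (Ns (diam E + 1 - t) : ℝ) / (d : ℝ)) := by
  classical
  cases nonempty_fintype V
  by_cases hsub : Subsingleton V
  · -- degenerate case: at most one vertex
    have hAe : A = ∅ := by
      ext p
      simp only [Set.mem_empty_iff_false, iff_false]
      intro hp
      have h1 := (hsp.1 p.1 p.2.1 p.2.2.1.1 p.2.2.1.2 p.2.2.2 hp).1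
      have e1 : p.2.2.1.1 = p.2.2.1.2 := Subsingleton.elim _ _
      rw [e1] at h1
      omega
    have htm : tmax A = 0 := by
      have h0 : {t | ∃ p ∈ A, p.2.2.2 = t} = ∅ := by simp [hAe]
      rw [tmax, h0]
      exact csSup_empty
    have hbw0 : bwT E d M B A = 0 := by
      rw [bwT, htm]
      simp
    have hdiam : diam E = 0 := by
      rw [diam]
      rcases isEmpty_or_nonempty V with hV | hV
      · have h0 : {n | ∃ u v : V, dist E u v = n} = ∅ := by
          ext n; simp
        rw [h0]; exact csSup_empty
      · obtain ⟨u⟩ := hV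
        have h0 : {n | ∃ u v : V, dist E u v = n} = {0} := by
          ext n
          constructor
          · rintro ⟨a, b, h⟩
            rw [Subsingleton.elim b a, dist_self] at h
            simp [← h]
          · rintro h
            refine ⟨u, u, ?_⟩
            rw [dist_self]
            simpa using h.symm
        rw [h0]; exact csSup_singleton 0
    have hval : (M / B) * (((Nat.card V : ℝ) - 1) / (Nat.card V : ℝ)) = 0 := by
      have hle1 : Nat.card V ≤ 1 := by
        rw [Nat.card_eq_fintype_card]
        exact Fintype.card_le_one_iff_subsingleton.2 hsub
      interval_cases h : Nat.card V <;> simp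
    refine iff_of_true (by rw [hbw0, hval]) ⟨fun _ => 0, ?_, ?_⟩
    · intro u x hx1 hx2; rw [hdiam] at hx2; omega
    · intro u v _ t ht1 ht2; rw [hdiam] at ht2; omega
  -- main case
  have hnt : Nontrivial V := not_subsingleton_iff_nontrivial.1 hsub
  obtain ⟨a0, b0, hab⟩ := hnt
  set D := diam E with hDdef
  set N := Nat.card V with hNdef
  have hN2 : 2 ≤ N := by
    rw [hNdef, Nat.card_eq_fintype_card]
    exact Fintype.one_lt_card_iff_nontrivial.2 ⟨a0, b0, hab⟩
  have hex_out : ∃ w, E a0 w := by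
    rcases hdist0 : dist E a0 b0 with _ | k
    · exact absurd (eq_of_dist_eq_zero hsc hdist0) hab
    obtain ⟨w, hw, -⟩ := exists_step hsc hdist0
    exact ⟨w, hw⟩
  have hd1 : 1 ≤ d := by
    obtain ⟨w, hw⟩ := hex_out
    have h1 := (hreg a0).1
    by_contra h
    have hd0 : d = 0 := by omega
    rw [hd0] at h1
    have hemp : {w | E a0 w} = ∅ := (Set.ncard_eq_zero (Set.toFinite _)).1 h1
    have : w ∈ {w | E a0 w} := hw
    rw [hemp] at this
    exact this
  have hD1 : 1 ≤ D := by
    obtain ⟨a', b', h1⟩ := dist_eq_one_of_exists_ne hsc hab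
    have := dist_le_diam (E := E) a' b'
    omega
  have htm : tmax A = D := tmax_eq_diam hsc hsp ⟨a0, b0, hab⟩
  set F := hA.1.toFinset with hF
  have hFA : ∀ q : Tup V, q ∈ F ↔ q ∈ A := fun q => Set.Finite.mem_toFinset _
  set EF : Finset (V × V) := Finset.univ.filter (fun e => E e.1 e.2) with hEF
  set out : V → Finset V := fun u => Finset.univ.filter (fun w => E u w) with hout
  set lE : V × V → ℕ → ℝ := fun e t =>
    ∑ q ∈ F.filter (fun q => q.2.2.1 = e ∧ q.2.2.2 = t), (volume q.2.1).toReal with hlE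
  set Pf : V → V → ℕ → ℝ := fun u v t =>
    ∑ q ∈ F.filter (fun q => q.1 = v ∧ q.2.2.1.1 = u ∧ q.2.2.2 = t),
      (volume q.2.1).toReal with hPf
  set Sf : V → ℕ → ℝ := fun u t =>
    ∑ q ∈ F.filter (fun q => q.2.2.1.1 = u ∧ q.2.2.2 = t), (volume q.2.1).toReal with hSf
  set tot : ℕ → ℝ := fun t =>
    ∑ q ∈ F.filter (fun q => q.2.2.2 = t), (volume q.2.1).toReal with htotdef
  set nx : V → ℕ → ℕ := fun u x =>
    (Finset.univ.filter (fun v => dist E u v = x)).card with hnx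
  set L : ℕ → ℝ := fun t =>
    sSup ((fun e => edgeLoad A e t) '' {e : V × V | E e.1 e.2}) with hL
  have hloadE : ∀ e t, edgeLoad A e t = lE e t := by
    intro e t
    rw [edgeLoad_eq hA.1 e t, hlE]
  have hlE0 : ∀ (e : V × V) (t : ℕ), ¬ E e.1 e.2 → lE e t = 0 := by
    intro e t he
    rw [hlE]
    refine Finset.sum_eq_zero ?_
    intro q hq
    obtain ⟨hqF, hqe, -⟩ := Finset.mem_filter.1 hq
    have h2 := (hA.2 q ((hFA q).1 hqF)).1
    rw [hqe] at h2
    exact absurd h2 he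
  have hlEnn : ∀ (e : V × V) (t : ℕ), 0 ≤ lE e t := by
    intro e t; rw [hlE]
    exact Finset.sum_nonneg fun q _ => ENNReal.toReal_nonneg
  have hPfnn : ∀ (u v : V) (t : ℕ), 0 ≤ Pf u v t := by
    intro u v t; rw [hPf]
    exact Finset.sum_nonneg fun q _ => ENNReal.toReal_nonneg
  have hSfib : ∀ u t, Sf u t = ∑ v : V, Pf u v t := by
    intro u t
    rw [hSf, hPf]
    simp only
    rw [← Finset.sum_fiberwise (F.filter (fun q => q.2.2.1.1 = u ∧ q.2.2.2 = t))
      (fun q => q.1) (fun q => (volume q.2.1).toReal)]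
    refine Finset.sum_congr rfl fun v _ => ?_
    rw [Finset.filter_filter]
    exact Finset.sum_congr (Finset.filter_congr fun q _ => by tauto) fun _ _ => rfl
  have htotS : ∀ t, tot t = ∑ u : V, Sf u t := by
    intro t
    rw [htotdef, hSf]
    simp only
    rw [← Finset.sum_fiberwise (F.filter (fun q => q.2.2.2 = t))
      (fun q => q.2.2.1.1) (fun q => (volume q.2.1).toReal)]
    refine Finset.sum_congr rfl fun u _ => ?_
    rw [Finset.filter_filter]
    exact Finset.sum_congr (Finset.filter_congr fun q _ => by tauto) fun _ _ => rfl
  have htotE : ∀ t, tot t = ∑ e ∈ EF, lE e t := by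
    intro t
    have h1 : tot t = ∑ e : V × V, lE e t := by
      rw [htotdef, hlE]
      simp only
      rw [← Finset.sum_fiberwise (F.filter (fun q => q.2.2.2 = t))
        (fun q => q.2.2.1) (fun q => (volume q.2.1).toReal)]
      refine Finset.sum_congr rfl fun e _ => ?_
      rw [Finset.filter_filter]
      exact Finset.sum_congr (Finset.filter_congr fun q _ => by tauto) fun _ _ => rfl
    rw [h1]
    symm
    refine Finset.sum_subset (Finset.subset_univ _) ?_
    intro e _ he
    refine hlE0 e t ?_
    intro hEe
    exact he (by simp [hEF, hEe])
  have hSout : ∀ u t, Sf u t = ∑ w ∈ out u, lE (u, w) t := by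
    intro u t
    have h1 : Sf u t = ∑ w : V, lE (u, w) t := by
      rw [hSf, hlE]
      simp only
      rw [← Finset.sum_fiberwise (F.filter (fun q => q.2.2.1.1 = u ∧ q.2.2.2 = t))
        (fun q => q.2.2.1.2) (fun q => (volume q.2.1).toReal)]
      refine Finset.sum_congr rfl fun w _ => ?_
      rw [Finset.filter_filter]
      refine Finset.sum_congr (Finset.filter_congr fun q _ => ?_) fun _ _ => rfl
      simp only [Prod.ext_iff]
      tauto
    rw [h1]
    symm
    refine Finset.sum_subset (Finset.subset_univ _) ?_
    intro w _ hw
    refine hlE0 (u, w) t ?_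
    intro hEe
    exact hw (by simp [hout, hEe])
  have houtcard : ∀ u : V, (out u).card = d := by
    intro u
    have h1 := (hreg u).1
    rwa [Set.ncard_eq_toFinset_card', Set.toFinset_setOf] at h1
  have hcardEF : EF.card = N * d := by
    rw [Finset.card_eq_sum_card_fiberwise
      (f := Prod.fst) (t := Finset.univ) (fun x _ => Finset.mem_univ _)]
    have h2 : ∀ u : V, (EF.filter (fun e => e.1 = u)).card = (out u).card := by
      intro u
      refine Finset.card_bij' (fun e _ => e.2) (fun w _ => (u, w)) ?_ ?_ ?_ ?_
      · intro e he
        simp only [hEF, Finset.mem_filter, Finset.mem_univ, true_and] at he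
        obtain ⟨hEe, he1⟩ := he
        simp only [hout, Finset.mem_filter, Finset.mem_univ, true_and]
        rwa [← he1]
      · intro w hw
        simp only [hout, Finset.mem_filter, Finset.mem_univ, true_and] at hw
        simp only [hEF, Finset.mem_filter, Finset.mem_univ, true_and]
        exact ⟨hw, trivial⟩
      · intro e he
        simp only [hEF, Finset.mem_filter, Finset.mem_univ, true_and] at he
        exact Prod.ext he.2.symm rfl
      · intro w _
        rfl
    calc ∑ u : V, (EF.filter (fun e => e.1 = u)).card = ∑ u : V, d := by
          refine Finset.sum_congr rfl fun u _ => ?_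
          rw [h2 u, houtcard u]
    _ = N * d := by
          rw [Finset.sum_const, Finset.card_univ, smul_eq_mul, ← Nat.card_eq_fintype_card,
            ← hNdef]
  have hnxcard : ∀ u x, {v : V | dist E u v = x}.ncard = nx u x := by
    intro u x
    rw [hnx, Set.ncard_eq_toFinset_card', Set.toFinset_setOf]
  have hcount : ∀ u : V, ∑ x ∈ Finset.Icc 1 D, nx u x = N - 1 := by
    intro u
    have hbi : (Finset.Icc 1 D).biUnion
        (fun x => Finset.univ.filter (fun v => dist E u v = x)) =
        Finset.univ.filter (fun v => v ≠ u) := by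
      ext v
      simp only [Finset.mem_biUnion, Finset.mem_Icc, Finset.mem_filter, Finset.mem_univ,
        true_and]
      constructor
      · rintro ⟨x, ⟨hx1, -⟩, hdx⟩ h
        subst h
        rw [dist_self] at hdx
        omega
      · intro hv
        refine ⟨dist E u v, ⟨?_, dist_le_diam u v⟩, rfl⟩
        rcases Nat.eq_zero_or_pos (dist E u v) with h | h
        · exact absurd (eq_of_dist_eq_zero hsc h).symm hv
        · exact h
    have hdisj : ∀ x ∈ Finset.Icc 1 D, ∀ y ∈ Finset.Icc 1 D, x ≠ y →
        Disjoint (Finset.univ.filter (fun v => dist E u v = x))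
          (Finset.univ.filter (fun v => dist E u v = y)) := by
      intro x _ y _ hxy
      refine Finset.disjoint_left.2 fun v hv1 hv2 => ?_
      simp only [Finset.mem_filter] at hv1 hv2
      exact hxy (hv1.2 ▸ hv2.2 ▸ rfl)
    calc ∑ x ∈ Finset.Icc 1 D, nx u x
        = ((Finset.Icc 1 D).biUnion
            (fun x => Finset.univ.filter (fun v => dist E u v = x))).card := by
          rw [Finset.card_biUnion hdisj]
    _ = (Finset.univ.filter (fun v => v ≠ u)).card := by rw [hbi]
    _ = N - 1 := by
          rw [Finset.filter_ne', Finset.card_erase_of_mem (Finset.mem_univ u),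
            Finset.card_univ, ← Nat.card_eq_fintype_card, ← hNdef]
  have hP1 : ∀ (u v : V) (t : ℕ), 1 ≤ t → t ≤ D → dist E u v = D + 1 - t →
      (1 : ℝ) ≤ Pf u v t := by
    intro u v t h1 h2 h3
    rw [hPf]
    exact one_le_P hsc hA hRS hsp h1 h2 h3
  have hSlow : ∀ (u : V) (t : ℕ), 1 ≤ t → t ≤ D →
      (nx u (D + 1 - t) : ℝ) ≤ Sf u t := by
    intro u t h1 h2
    calc (nx u (D + 1 - t) : ℝ)
        = ∑ v ∈ Finset.univ.filter (fun v => dist E u v = D + 1 - t), (1 : ℝ) := by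
          rw [hnx]; simp
    _ ≤ ∑ v ∈ Finset.univ.filter (fun v => dist E u v = D + 1 - t), Pf u v t :=
          Finset.sum_le_sum fun v hv => hP1 u v t h1 h2 (Finset.mem_filter.1 hv).2
    _ ≤ ∑ v : V, Pf u v t :=
          Finset.sum_le_sum_of_subset_of_nonneg (Finset.filter_subset _ _)
            fun v _ _ => hPfnn u v t
    _ = Sf u t := (hSfib u t).symm
  have hEFne : EF.Nonempty := by
    obtain ⟨w, hw⟩ := hex_out
    exact ⟨(a0, w), by simp [hEF, hw]⟩
  have himg : ∀ t, (fun e => edgeLoad A e t) '' {e : V × V | E e.1 e.2} =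
      (fun e => lE e t) '' ↑EF := by
    intro t
    have hs : {e : V × V | E e.1 e.2} = ↑EF := by ext e; simp [hEF]
    rw [hs]
    exact Set.image_congr fun e _ => hloadE e t
  have hLmem : ∀ t, ∃ e ∈ EF, lE e t = L t := by
    intro t
    have h1 : L t ∈ (fun e => lE e t) '' ↑EF := by
      rw [hL]
      simp only
      rw [himg t]
      exact Set.Nonempty.csSup_mem
        ((Finset.coe_nonempty.2 hEFne).image _) ((EF.finite_toSet).image _)
    obtain ⟨e, he, hev⟩ := h1
    exact ⟨e, Finset.mem_coe.1 he, hev⟩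
  have hle : ∀ t, ∀ e ∈ EF, lE e t ≤ L t := by
    intro t e he
    rw [hL]
    simp only
    rw [himg t]
    exact le_csSup ((EF.finite_toSet).image _).bddAbove
      (Set.mem_image_of_mem _ (Finset.mem_coe.2 he))
  have hstep : ∀ t, stepT E d M B A t = ((d : ℝ) / B) * (M / (N : ℝ)) * L t := by
    intro t
    rw [stepT, hL, hNdef]
  have hbwT : bwT E d M B A = ∑ t ∈ Finset.Icc 1 D, ((d : ℝ) / B) * (M / (N : ℝ)) * L t := by
    rw [bwT, htm]
    exact Finset.sum_congr rfl fun t _ => hstep t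
  have hN0 : (0 : ℝ) < (N : ℝ) := by positivity
  have hNne : (N : ℝ) ≠ 0 := hN0.ne'
  have hd0 : (0 : ℝ) < (d : ℝ) := by exact_mod_cast hd1
  have hdne : (d : ℝ) ≠ 0 := hd0.ne'
  have hchain : ∀ t, 1 ≤ t → t ≤ D →
      (∑ u : V, (nx u (D + 1 - t) : ℝ)) ≤ tot t ∧ tot t ≤ ((N : ℝ) * d) * L t := by
    intro t h1 h2
    constructor
    · calc ∑ u : V, (nx u (D + 1 - t) : ℝ) ≤ ∑ u : V, Sf u t :=
            Finset.sum_le_sum fun u _ => hSlow u t h1 h2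
      _ = tot t := (htotS t).symm
    · calc tot t = ∑ e ∈ EF, lE e t := htotE t
      _ ≤ ∑ e ∈ EF, L t := Finset.sum_le_sum fun e he => hle t e he
      _ = (EF.card : ℝ) * L t := by rw [Finset.sum_const, nsmul_eq_mul]
      _ = ((N : ℝ) * d) * L t := by rw [hcardEF]; push_cast; ring
  have hkey : ∀ t ∈ Finset.Icc 1 D,
      M / (B * (N : ℝ) ^ 2) * (∑ u : V, (nx u (D + 1 - t) : ℝ)) ≤
        ((d : ℝ) / B) * (M / (N : ℝ)) * L t := by
    intro t ht
    obtain ⟨h1, h2⟩ := Finset.mem_Icc.1 ht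
    have hc := hchain t h1 h2
    have hA1 : (∑ u : V, (nx u (D + 1 - t) : ℝ)) ≤ ((N : ℝ) * d) * L t :=
      le_trans hc.1 hc.2
    calc M / (B * (N : ℝ) ^ 2) * (∑ u : V, (nx u (D + 1 - t) : ℝ))
        ≤ M / (B * (N : ℝ) ^ 2) * (((N : ℝ) * d) * L t) :=
          mul_le_mul_of_nonneg_left hA1 (by positivity)
    _ = ((d : ℝ) / B) * (M / (N : ℝ)) * L t := by field_simp
  have hreindex : ∀ f : ℕ → ℝ,
      ∑ t ∈ Finset.Icc 1 D, f (D + 1 - t) = ∑ x ∈ Finset.Icc 1 D, f x := by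
    intro f
    refine Finset.sum_nbij' (fun t => D + 1 - t) (fun x => D + 1 - x) ?_ ?_ ?_ ?_ ?_
    · intro t ht; simp only [Finset.mem_Icc] at ht ⊢; omega
    · intro x hx; simp only [Finset.mem_Icc] at hx ⊢; omega
    · intro t ht; simp only [Finset.mem_Icc] at ht
      show D + 1 - (D + 1 - t) = t; omega
    · intro x hx; simp only [Finset.mem_Icc] at hx
      show D + 1 - (D + 1 - x) = x; omega
    · intro t _; rfl
  have hsumnx : ∀ u : V, ∑ x ∈ Finset.Icc 1 D, (nx u x : ℝ) = (N : ℝ) - 1 := by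
    intro u
    rw [← Nat.cast_sum, hcount u, Nat.cast_sub (by omega), Nat.cast_one]
  have htarget : ∑ t ∈ Finset.Icc 1 D,
      M / (B * (N : ℝ) ^ 2) * (∑ u : V, (nx u (D + 1 - t) : ℝ)) =
      (M / B) * (((N : ℝ) - 1) / (N : ℝ)) := by
    rw [← Finset.mul_sum]
    have h1 : ∑ t ∈ Finset.Icc 1 D, (∑ u : V, (nx u (D + 1 - t) : ℝ)) =
        (N : ℝ) * ((N : ℝ) - 1) := by
      rw [Finset.sum_comm]
      have h2 : ∀ u : V, ∑ t ∈ Finset.Icc 1 D, (nx u (D + 1 - t) : ℝ) = (N : ℝ) - 1 := by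
        intro u
        rw [hreindex (fun x => (nx u x : ℝ)), hsumnx u]
      rw [Finset.sum_congr rfl fun u _ => h2 u, Finset.sum_const, Finset.card_univ,
        ← Nat.card_eq_fintype_card, ← hNdef, nsmul_eq_mul]
    rw [h1]
    field_simp
  constructor
  · -- forward direction
    intro hbw
    rw [hbwT] at hbw
    have hsumeq : ∑ t ∈ Finset.Icc 1 D,
        M / (B * (N : ℝ) ^ 2) * (∑ u : V, (nx u (D + 1 - t) : ℝ)) =
        ∑ t ∈ Finset.Icc 1 D, ((d : ℝ) / B) * (M / (N : ℝ)) * L t := by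
      rw [hbw, htarget]
    have hallt := (Finset.sum_eq_sum_iff_of_le hkey).1 hsumeq
    have hmain : ∀ t ∈ Finset.Icc 1 D,
        (∀ e ∈ EF, lE e t = L t) ∧ (∀ u : V, (nx u (D + 1 - t) : ℝ) = (d : ℝ) * L t) := by
      intro t ht
      obtain ⟨h1, h2⟩ := Finset.mem_Icc.1 ht
      have heq := hallt t ht
      have hNdL : ((N : ℝ) * d) * L t = ∑ u : V, (nx u (D + 1 - t) : ℝ) := by
        have hc : ((d : ℝ) / B) * (M / (N : ℝ)) * L t =
            M / (B * (N : ℝ) ^ 2) * (((N : ℝ) * d) * L t) := by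
          field_simp
        rw [hc] at heq
        have hpos : (0 : ℝ) < M / (B * (N : ℝ) ^ 2) := by positivity
        exact (mul_left_cancel₀ hpos.ne' heq).symm
      obtain ⟨hc1, hc2⟩ := hchain t h1 h2
      have htoteq : tot t = ((N : ℝ) * d) * L t :=
        le_antisymm hc2 (by rw [hNdL]; exact hc1)
      have hedge : ∀ e ∈ EF, lE e t = L t := by
        have hzero : ∑ e ∈ EF, (L t - lE e t) = 0 := by
          rw [Finset.sum_sub_distrib, Finset.sum_const, nsmul_eq_mul, ← htotE t, htoteq,
            hcardEF]
          push_cast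
          ring
        intro e he
        have hz := (Finset.sum_eq_zero_iff_of_nonneg
          fun e he => sub_nonneg.2 (hle t e he)).1 hzero e he
        linarith
      have hSu : ∀ u : V, Sf u t = (nx u (D + 1 - t) : ℝ) := by
        have hzero : ∑ u : V, (Sf u t - (nx u (D + 1 - t) : ℝ)) = 0 := by
          rw [Finset.sum_sub_distrib, ← htotS t, htoteq, hNdL, sub_self]
        intro u
        have hz := (Finset.sum_eq_zero_iff_of_nonneg
          fun u _ => sub_nonneg.2 (hSlow u t h1 h2)).1 hzero u (Finset.mem_univ u)
        linarith
      refine ⟨hedge, fun u => ?_⟩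
      rw [← hSu u, hSout u t]
      have houtEF : ∀ w ∈ out u, (u, w) ∈ EF := by
        intro w hw
        simp only [hout, Finset.mem_filter, Finset.mem_univ, true_and] at hw
        simp [hEF, hw]
      calc ∑ w ∈ out u, lE (u, w) t = ∑ w ∈ out u, L t :=
            Finset.sum_congr rfl fun w hw => hedge (u, w) (houtEF w hw)
      _ = (d : ℝ) * L t := by rw [Finset.sum_const, houtcard, nsmul_eq_mul]
    refine ⟨fun x => nx a0 x, ?_, ?_⟩
    · intro u x hx1 hx2
      have ht : D + 1 - x ∈ Finset.Icc 1 D := Finset.mem_Icc.2 (by omega)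
      have hxx : D + 1 - (D + 1 - x) = x := by omega
      have h1 := (hmain _ ht).2 u
      have h2 := (hmain _ ht).2 a0
      rw [hxx] at h1 h2
      have h3 : (nx u x : ℝ) = (nx a0 x : ℝ) := by rw [h1, h2]
      rw [hnxcard u x]
      exact_mod_cast h3
    · intro u v huv t h1 h2
      have ht : t ∈ Finset.Icc 1 D := Finset.mem_Icc.2 ⟨h1, h2⟩
      have he : (u, v) ∈ EF := by simp [hEF, huv]
      have h3 := (hmain t ht).1 (u, v) he
      have h4 := (hmain t ht).2 a0
      rw [hloadE (u, v) t, h3]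
      rw [h4]
      field_simp
  · -- backward direction
    rintro ⟨Ns, hNs1, hNs2⟩
    rw [hbwT]
    have himg2 : ∀ t, 1 ≤ t → t ≤ D → L t = (Ns (D + 1 - t) : ℝ) / (d : ℝ) := by
      intro t h1 h2
      have hconst : ∀ e ∈ EF, lE e t = (Ns (D + 1 - t) : ℝ) / (d : ℝ) := by
        intro e he
        have hEe : E e.1 e.2 := by
          simp only [hEF, Finset.mem_filter, Finset.mem_univ, true_and] at he
          exact he
        rw [← hloadE]
        exact hNs2 e.1 e.2 hEe t h1 h2
      obtain ⟨e0, he0, heL⟩ := hLmem t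
      rw [← heL, hconst e0 he0]
    have hNseq : ∀ x ∈ Finset.Icc 1 D, (Ns x : ℝ) = (nx a0 x : ℝ) := by
      intro x hx
      obtain ⟨hx1, hx2⟩ := Finset.mem_Icc.1 hx
      have := hNs1 a0 x hx1 hx2
      rw [hnxcard a0 x] at this
      exact_mod_cast this.symm
    calc ∑ t ∈ Finset.Icc 1 D, ((d : ℝ) / B) * (M / (N : ℝ)) * L t
        = ∑ t ∈ Finset.Icc 1 D, M / (B * (N : ℝ)) * (Ns (D + 1 - t) : ℝ) := by
          refine Finset.sum_congr rfl fun t ht => ?_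
          obtain ⟨h1, h2⟩ := Finset.mem_Icc.1 ht
          rw [himg2 t h1 h2]
          field_simp
    _ = M / (B * (N : ℝ)) * ∑ t ∈ Finset.Icc 1 D, (Ns (D + 1 - t) : ℝ) := by
          rw [Finset.mul_sum]
    _ = M / (B * (N : ℝ)) * ((N : ℝ) - 1) := by
          rw [hreindex (fun x => (Ns x : ℝ)),
            Finset.sum_congr rfl hNseq, hsumnx a0]
    _ = (M / B) * (((N : ℝ) - 1) / (N : ℝ)) := by
          field_simp

end Collective
end

section
/- Let G be a strongly connected digraph and A a schedule on G. Then A is simultaneously a reduce-scatter schedule and a shortest-path schedule if and only if both: (1) ((v,C),(u,w),t) ∈ A if and only if d(u,v) = d(w,v)+1 = D(G)+1−t; and (2) for all distinct u,v ∈ V_G, the collection of chunks E_{u,v} = {C : ((v,C),(u,w),t) ∈ A for some w and t} covers the shard, i.e., [0,1) = ⋃_{C∈E_{u,v}} C. -/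
open MeasureTheory

/-!
Along a tuple `((v,C),(u,w),t)` of a shortest-path schedule the distance to `v` drops by one
while `d(u,v) + t` stays equal to `D(G) + 1`, so the step grows by one. Hence, if the chunks
leaving every `u ≠ v` towards `v` cover the shard, a point `x` is routed to `v` by repeatedly
following a tuple whose chunk contains it, and the steps along that route increase strictly.
Conversely, the first hop of a reduce-scatter route out of `u` is such a tuple.
-/

namespace Collective

section ReducePath

variable {V : Type*} (A : Sched V) (v : V) (x : ℝ)

def ReducePath (u : V) (s : ℕ) : Prop :=
  ∃ (m : ℕ) (w : Fin (m + 1) → V) (C : Fin m → Set ℝ) (t : Fin m → ℕ),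
    w 0 = u ∧ w (Fin.last m) = v ∧ StrictMono t ∧
    ∀ i : Fin m, s ≤ t i ∧ (v, C i, (w i.castSucc, w i.succ), t i) ∈ A ∧ x ∈ C i

variable {A v x}

theorem ReducePath.refl (s : ℕ) : ReducePath A v x v s :=
  ⟨0, fun _ => v, Fin.elim0, Fin.elim0, rfl, rfl, fun i => Fin.elim0 i, fun i => Fin.elim0 i⟩

theorem ReducePath.cons {u w : V} {C : Set ℝ} {s : ℕ} (hmem : (v, C, (u, w), s) ∈ A)
    (hx : x ∈ C) (hp : ReducePath A v x w (s + 1)) : ReducePath A v x u s := by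
  obtain ⟨m, w', C', t, hw0, hlast, hmono, hstep⟩ := hp
  refine ⟨m + 1, Fin.cons u w', Fin.cons C C', Fin.cons s t, rfl, ?_,
    Fin.strictMono_cons.2 ⟨fun j => (hstep j).1, hmono⟩, fun i => ?_⟩
  · rw [← Fin.succ_last, Fin.cons_succ, hlast]
  · refine Fin.cases ⟨le_rfl, by simpa [hw0] using hmem, hx⟩ (fun j => ?_) i
    obtain ⟨hs, hj, hxj⟩ := hstep j
    refine ⟨by simp only [Fin.cons_succ]; omega, ?_, hxj⟩
    simpa only [← Fin.succ_castSucc, Fin.cons_succ] using hj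

theorem ReducePath.exists_first_hop {u : V} {s : ℕ} (hp : ReducePath A v x u s) (huv : u ≠ v) :
    ∃ (C : Set ℝ) (w : V) (t : ℕ), (v, C, (u, w), t) ∈ A ∧ x ∈ C := by
  obtain ⟨m, w, C, t, hw0, hlast, -, hstep⟩ := hp
  cases m with
  | zero => exact absurd (hw0.symm.trans hlast) huv
  | succ m =>
    obtain ⟨-, hmem, hxC⟩ := hstep 0
    exact ⟨C 0, w (Fin.succ 0), t 0, by simpa [hw0] using hmem, hxC⟩

/-- The shortest-path construction, for an arbitrary potential `d` in place of `dist · v`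
and `c` in place of `D(G) + 1`. -/
theorem reducePath_of_potential (d : V → ℕ) (c : ℕ)
    (hpot : ∀ (C : Set ℝ) (u w : V) (t : ℕ), (v, C, (u, w), t) ∈ A → d u = d w + 1 ∧ d u + t = c)
    (hcov : ∀ u, u ≠ v → ∃ (C : Set ℝ) (w : V) (t : ℕ), (v, C, (u, w), t) ∈ A ∧ x ∈ C)
    (u : V) : ReducePath A v x u (c - d u) := by
  induction hd : d u using Nat.strong_induction_on generalizing u with
  | _ n ih =>
    subst hd
    by_cases huv : u = v
    · subst huv
      exact .refl _
    obtain ⟨C, w, t, hmem, hxC⟩ := hcov u huv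
    obtain ⟨hdw, hdt⟩ := hpot C u w t hmem
    have hw : ReducePath A v x w (c - d w) := ih (d w) (by omega) w rfl
    rw [show c - d u = t by omega]
    exact .cons hmem hxC (by rwa [show t + 1 = c - d w by omega])

end ReducePath

theorem isReduceScatter_iff_reducePath {V : Type*} (A : Sched V) :
    IsReduceScatter A ↔ ∀ u v : V, u ≠ v → ∀ x ∈ shard, ∃ s, ReducePath A v x u s := by
  constructor
  · intro h u v huv x hx
    obtain ⟨m, w, C, t, hw0, hlast, hmono, hstep⟩ := h u v huv x hx
    exact ⟨0, m, w, C, t, hw0, hlast, hmono, fun i => ⟨Nat.zero_le _, hstep i⟩⟩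
  · intro h u v huv x hx
    obtain ⟨_, m, w, C, t, hw0, hlast, hmono, hstep⟩ := h u v huv x hx
    exact ⟨m, w, C, t, hw0, hlast, hmono, fun i => (hstep i).2⟩

theorem shortest_path_reduce_scatter_iff_general {V : Type*}
    (E : V → V → Prop) (A : Sched V)
    (hA : IsSched E A) :
    (IsReduceScatter A ∧ IsShortestPathSched E A) ↔
      (IsShortestPathSched E A ∧
        ∀ u v : V, u ≠ v →
          shard = ⋃₀ {C : Set ℝ | ∃ (w : V) (t : ℕ), (v, C, (u, w), t) ∈ A}) := by
  constructor
  · rintro ⟨hrs, hsp⟩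
    refine ⟨hsp, fun u v huv => Set.Subset.antisymm (fun x hx => ?_) ?_⟩
    · obtain ⟨s, hp⟩ := (isReduceScatter_iff_reducePath A).1 hrs u v huv x hx
      obtain ⟨C, w, t, hmem, hxC⟩ := hp.exists_first_hop huv
      exact ⟨C, ⟨w, t, hmem⟩, hxC⟩
    · rintro x ⟨C, ⟨w, t, hmem⟩, hxC⟩
      exact (hA.2 _ hmem).2.1 hxC
  · rintro ⟨hsp, hcov⟩
    refine ⟨(isReduceScatter_iff_reducePath A).2 fun u v huv x hx =>
      ⟨diam E + 1 - dist E u v, ?_⟩, hsp⟩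
    refine reducePath_of_potential (dist E · v) (diam E + 1)
      (hsp.1 v) (fun u' hu'v => ?_) u
    rw [hcov u' v hu'v] at hx
    obtain ⟨C, ⟨w, t, hmem⟩, hxC⟩ := hx
    exact ⟨C, w, t, hmem, hxC⟩

/-- a schedule `A` on a strongly connected digraph is simultaneously a
reduce-scatter schedule and a shortest-path schedule iff (1) it satisfies the
shortest-path condition and (2) for all distinct `u,v` the chunks `A` sends out of `u`
with destination `v` cover the whole shard. -/
theorem shortest_path_reduce_scatter_iff {V : Type*} [Finite V]
    (E : V → V → Prop) (A : Sched V)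
    (hsc : StronglyConnected E) (hA : IsSched E A) :
    (IsReduceScatter A ∧ IsShortestPathSched E A) ↔
      (IsShortestPathSched E A ∧
        ∀ u v : V, u ≠ v →
          shard = ⋃₀ {C : Set ℝ | ∃ (w : V) (t : ℕ), (v, C, (u, w), t) ∈ A}) :=
  shortest_path_reduce_scatter_iff_general E A hA

end Collective
end
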